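/- arXiv:2510.13295 — 2 statements merged into one kernel-verified Lean document; each statement's English description precedes it below -/
import Mathlib

section
/- The finite part of the divergent harmonic sum H_{1,2}: the sequence H_{1,2}(n) − ζ(2)·log n converges as n → ∞, and its limit equals ζ(2)·γ − 2·ζ(3). -/
/-- The multiple harmonic sum `H_{s_1,…,s_r}(n) = Σ_{n ≥ n_1 > … > n_r > 0}
1/(n_1^{s_1}⋯n_r^{s_r}) ∈ ℚ`, defined by the nested recursion
`H_{s::t}(n) = Σ_{m=1}^{n} (1/m^s)·H_t(m-1)`. -/
def H : List ℕ → ℕ → ℚ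
  | [], _ => 1
  | s :: t, n => ∑ m ∈ Finset.Icc 1 n, (1 / (m : ℚ) ^ s) * H t (m - 1)

/-- The zeta value `ζ(k) = Σ_{n≥1} 1/n^k`. -/
noncomputable def zeta (k : ℕ) : ℝ := ∑' n : ℕ, (1 : ℝ) / ((n : ℝ) + 1) ^ k

/-!
With the tail `t_m = Σ_{k>m} 1/k²` one has `H_{1,2}(n) = Σ_{m<n} (ζ(2) - t_m)/(m+1)`, which splits
off `ζ(2)·H_n`, and `H_n - log n → γ`. It remains to see that `Σ_m t_m/(m+1)`, the sum of
`1/(a b²)` over `1 ≤ a ≤ b`, i.e. `ζ(3) + ζ(2,1)`, equals `2ζ(3)`: this is Euler's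
`ζ(2,1) = ζ(3)`. Sum `1/(ab(a+b)) = 1/(a(a+b)²) + 1/(b(a+b)²)` over `a, b ≥ 1`. The right side
gives `2ζ(2,1)`, while summing over `b` first telescopes to `Σ_a H_a/a² = ζ(3) + ζ(2,1)`.
-/

open Filter Finset Topology

lemma hasSum_sub_add_of_antitone {u : ℕ → ℝ} (hu : Antitone u) (h0 : Tendsto u atTop (𝓝 0))
    (L : ℕ) : HasSum (fun k => u k - u (k + L)) (∑ i ∈ range L, u i) := by
  refine (hasSum_iff_tendsto_nat_of_nonneg (fun k => sub_nonneg.2 (hu (by omega))) _).2 ?_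
  have hpartial (N : ℕ) : ∑ k ∈ range N, (u k - u (k + L)) =
      ∑ i ∈ range L, u i - ∑ j ∈ range L, u (N + j) := by
    have hN := sum_range_add u N L
    have hL := sum_range_add u L N
    rw [add_comm L N] at hL
    simp only [sum_sub_distrib, add_comm _ L]
    linarith
  simp_rw [hpartial]
  simpa using tendsto_const_nhds.sub
    (tendsto_finsetSum (range L) fun j _ => h0.comp (tendsto_add_atTop_nat j))

lemma hasSum_zeta {k : ℕ} (hk : 1 < k) :
    HasSum (fun n : ℕ => 1 / ((n : ℝ) + 1) ^ k) (zeta k) := by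
  refine Summable.hasSum ?_
  exact_mod_cast (summable_nat_add_iff 1).2 (Real.summable_one_div_nat_pow.2 hk)

lemma H_cons (s : ℕ) (t : List ℕ) (n : ℕ) :
    (H (s :: t) n : ℝ) = ∑ m ∈ range n, 1 / ((m : ℝ) + 1) ^ s * H t m := by
  rw [H, ← Ico_add_one_right_eq_Icc, sum_Ico_eq_sum_range]
  push_cast
  refine sum_congr rfl fun m _ => ?_
  simp [add_comm]

lemma harmonic_cast_eq (n : ℕ) : (harmonic n : ℝ) = ∑ i ∈ range n, 1 / ((i : ℝ) + 1) := by
  simp [harmonic]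

noncomputable def zetaTwoTail (m : ℕ) : ℝ := ∑' k : ℕ, 1 / ((k : ℝ) + m + 1) ^ 2

lemma hasSum_zetaTwoTail (m : ℕ) :
    HasSum (fun k : ℕ => 1 / ((k : ℝ) + m + 1) ^ 2) (zetaTwoTail m) := by
  refine Summable.hasSum ?_
  exact_mod_cast (summable_nat_add_iff m).2 (hasSum_zeta one_lt_two).summable

lemma sum_range_add_zetaTwoTail (m : ℕ) :
    ∑ k ∈ range m, 1 / ((k : ℝ) + 1) ^ 2 + zetaTwoTail m = zeta 2 := by
  have h := (hasSum_nat_add_iff' m).2 (hasSum_zeta one_lt_two)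
  push_cast at h
  linarith [h.unique (hasSum_zetaTwoTail m)]

lemma zetaTwoTail_le (m : ℕ) : zetaTwoTail m ≤ 2 / (m + 1) := by
  refine Real.tsum_le_of_sum_range_le (fun k => by positivity) fun n => ?_
  calc ∑ k ∈ range n, 1 / ((k : ℝ) + m + 1) ^ 2
      = ∑ i ∈ Ioo m (n + m + 1), ((i : ℝ) ^ 2)⁻¹ := by
        rw [← Ico_add_one_left_eq_Ioo, sum_Ico_eq_sum_range, show n + m + 1 - (m + 1) = n by omega]
        refine sum_congr rfl fun k _ => ?_
        push_cast
        ring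
    _ ≤ 2 / (m + 1) := sum_Ioo_inv_sq_le m _

lemma H_two_eq (n : ℕ) : (H [2] n : ℝ) = zeta 2 - zetaTwoTail n := by
  rw [H_cons, ← sum_range_add_zetaTwoTail n]
  simp [H]

lemma H_one_two_eq (n : ℕ) :
    (H [1, 2] n : ℝ) = zeta 2 * harmonic n - ∑ m ∈ range n, zetaTwoTail m / (m + 1) := by
  rw [H_cons, harmonic_cast_eq, mul_sum, ← sum_sub_distrib]
  refine sum_congr rfl fun m _ => ?_
  rw [H_two_eq]
  ring

/-- With `(a, b) = (i + 1, i + j + 1)` these are the terms `1 / (a b²)`, `1 ≤ a ≤ b`, of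
`ζ(3) + ζ(2,1)`. -/
noncomputable def eulerTerm (p : ℕ × ℕ) : ℝ := 1 / (((p.1 : ℝ) + 1) * ((p.1 : ℝ) + p.2 + 1) ^ 2)

noncomputable def eulerSymmTerm (p : ℕ × ℕ) : ℝ :=
  1 / (((p.1 : ℝ) + 1) * ((p.2 : ℝ) + 1) * ((p.1 : ℝ) + p.2 + 2))

lemma hasSum_eulerTerm_row (i : ℕ) :
    HasSum (fun j => eulerTerm (i, j)) (zetaTwoTail i / (i + 1)) := by
  have hterm (j : ℕ) :
      eulerTerm (i, j) = 1 / ((i : ℝ) + 1) * (1 / ((j : ℝ) + i + 1) ^ 2) := by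
    rw [eulerTerm, one_div_mul_one_div, add_comm (j : ℝ)]
  simpa only [hterm, one_div_mul_eq_div] using
    (hasSum_zetaTwoTail i).mul_left (1 / ((i : ℝ) + 1))

lemma summable_eulerTerm : Summable eulerTerm := by
  refine (summable_prod_of_nonneg fun p => by unfold eulerTerm; positivity).2
    ⟨fun i => (hasSum_eulerTerm_row i).summable, ?_⟩
  simp_rw [(hasSum_eulerTerm_row _).tsum_eq]
  refine Summable.of_nonneg_of_le (fun i => by unfold zetaTwoTail; positivity) (fun i => ?_)
    ((hasSum_zeta one_lt_two).summable.mul_left 2)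
  calc zetaTwoTail i / (i + 1) ≤ 2 / (i + 1) / (i + 1) := by
        gcongr; exact zetaTwoTail_le i
    _ = 2 * (1 / ((i : ℝ) + 1) ^ 2) := by rw [div_div, ← sq, mul_one_div]

lemma hasSum_zetaTwoTail_div_tsum_eulerTerm :
    HasSum (fun m => zetaTwoTail m / (m + 1)) (∑' p, eulerTerm p) :=
  summable_eulerTerm.hasSum.prod_fiberwise hasSum_eulerTerm_row

lemma HasSum.sum_antidiagonal {A α : Type*} [AddMonoid A] [HasAntidiagonal A] [AddCommMonoid α]
    [TopologicalSpace α] [ContinuousAdd α] [RegularSpace α] {f : A × A → α} {a : α}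
    (h : HasSum f a) : HasSum (fun n => ∑ p ∈ antidiagonal n, f p) a :=
  (HasAntidiagonal.sigmaAntidiagonalEquivProd.hasSum_iff.2 h).sigma fun n =>
    (antidiagonal n).hasSum f

lemma sum_antidiagonal_eulerTerm (n : ℕ) :
    ∑ p ∈ antidiagonal n, eulerTerm p = harmonic (n + 1) / ((n : ℝ) + 1) ^ 2 := by
  have hterm (p : ℕ × ℕ) (hp : p ∈ antidiagonal n) :
      eulerTerm p = 1 / ((p.1 : ℝ) + 1) / ((n : ℝ) + 1) ^ 2 := by
    rw [HasAntidiagonal.mem_antidiagonal] at hp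
    rw [eulerTerm, ← hp, div_div]
    push_cast
    ring
  rw [sum_congr rfl hterm, ← sum_div, Nat.sum_antidiagonal_eq_sum_range_succ_mk, harmonic_cast_eq]

lemma eulerSymmTerm_eq (p : ℕ × ℕ) :
    eulerSymmTerm p = eulerTerm (p.1, p.2 + 1) + eulerTerm (p.2, p.1 + 1) := by
  simp only [eulerSymmTerm, eulerTerm]
  push_cast
  field_simp
  ring

lemma hasSum_eulerSymmTerm_row (m : ℕ) :
    HasSum (fun k => eulerSymmTerm (m, k)) (harmonic (m + 1) / ((m : ℝ) + 1) ^ 2) := by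
  have hu : Antitone fun k : ℕ => 1 / ((k : ℝ) + 1) := fun i j hij => by
    dsimp only
    gcongr
  have hterm (k : ℕ) : eulerSymmTerm (m, k) =
      (1 / ((k : ℝ) + 1) - 1 / (((k + (m + 1) : ℕ) : ℝ) + 1)) / ((m : ℝ) + 1) ^ 2 := by
    rw [eulerSymmTerm]
    push_cast
    field_simp
    ring
  rw [funext hterm, harmonic_cast_eq]
  exact (hasSum_sub_add_of_antitone hu tendsto_one_div_add_atTop_nhds_zero_nat
    (m + 1)).div_const _

lemma summable_eulerTerm_shift : Summable fun p : ℕ × ℕ => eulerTerm (p.1, p.2 + 1) :=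
  summable_eulerTerm.comp_injective (i := Prod.map id (· + 1))
    (Function.Injective.prodMap (fun _ _ => id) (add_left_injective 1))

lemma summable_eulerTerm_shift_swap : Summable fun p : ℕ × ℕ => eulerTerm (p.2, p.1 + 1) :=
  summable_eulerTerm_shift.comp_injective (i := Prod.swap) Prod.swap_injective

lemma tsum_eulerSymmTerm_eq_two_mul :
    ∑' p, eulerSymmTerm p = 2 * ∑' p : ℕ × ℕ, eulerTerm (p.1, p.2 + 1) := by
  have hswap : ∑' p : ℕ × ℕ, eulerTerm (p.2, p.1 + 1) = ∑' p : ℕ × ℕ, eulerTerm (p.1, p.2 + 1) :=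
    (Equiv.prodComm ℕ ℕ).tsum_eq fun p => eulerTerm (p.1, p.2 + 1)
  simp_rw [eulerSymmTerm_eq]
  rw [summable_eulerTerm_shift.tsum_add summable_eulerTerm_shift_swap, hswap]
  ring

lemma tsum_eulerSymmTerm_eq_tsum_eulerTerm : ∑' p, eulerSymmTerm p = ∑' p, eulerTerm p := by
  have hsymm : Summable eulerSymmTerm := by
    simp_rw [funext eulerSymmTerm_eq]
    exact summable_eulerTerm_shift.add summable_eulerTerm_shift_swap
  have h := summable_eulerTerm.hasSum.sum_antidiagonal
  simp_rw [sum_antidiagonal_eulerTerm] at h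
  exact (hsymm.hasSum.prod_fiberwise hasSum_eulerSymmTerm_row).unique h

lemma tsum_eulerTerm_shift :
    ∑' p : ℕ × ℕ, eulerTerm (p.1, p.2 + 1) = ∑' p, eulerTerm p - zeta 3 := by
  have hrow (i : ℕ) : HasSum (fun j => eulerTerm (i, j + 1))
      (zetaTwoTail i / (i + 1) - 1 / ((i : ℝ) + 1) ^ 3) := by
    have h := (hasSum_nat_add_iff' 1).2 (hasSum_eulerTerm_row i)
    rwa [sum_range_one, eulerTerm, Nat.cast_zero, add_zero, ← pow_succ'] at h
  exact (summable_eulerTerm_shift.hasSum.prod_fiberwise hrow).unique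
    (hasSum_zetaTwoTail_div_tsum_eulerTerm.sub (hasSum_zeta (by norm_num)))

lemma hasSum_zetaTwoTail_div : HasSum (fun m => zetaTwoTail m / (m + 1)) (2 * zeta 3) := by
  have h := tsum_eulerSymmTerm_eq_two_mul
  rw [tsum_eulerSymmTerm_eq_tsum_eulerTerm, tsum_eulerTerm_shift] at h
  convert hasSum_zetaTwoTail_div_tsum_eulerTerm using 1
  linarith

/-- finite part of the divergent harmonic sum `H_{1,2}`: the sequence
`H_{1,2}(n) − ζ(2)·log n` converges as `n → ∞`, with limit `ζ(2)·γ − 2·ζ(3)`,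
where `γ` is the Euler–Mascheroni constant. -/
theorem finitePart_H_one_two :
    Filter.Tendsto (fun n : ℕ => (H [1, 2] n : ℝ) - zeta 2 * Real.log n)
      Filter.atTop
      (nhds (zeta 2 * Real.eulerMascheroniConstant - 2 * zeta 3)) := by
  simp_rw [H_one_two_eq]
  convert (Real.tendsto_harmonic_sub_log.const_mul (zeta 2)).sub
    hasSum_zetaTwoTail_div.tendsto_sum_nat using 2
  ring
end

section
/- The finite part of the divergent harmonic sum H_{1,1}: the sequence H_{1,1}(n) − (1/2)·(log n)² − γ·log n converges as n → ∞, and its limit equals (γ² − ζ(2))/2. -/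
open Filter Topology Finset Real

local notation "γ" => Real.eulerMascheroniConstant

lemma H_cons_succ (s : ℕ) (t : List ℕ) (n : ℕ) :
    H (s :: t) (n + 1) = H (s :: t) n + 1 / ((n : ℚ) + 1) ^ s * H t n := by
  rw [H, H, sum_Icc_succ_top (by omega)]
  push_cast
  simp

lemma H_singleton_one (n : ℕ) : H [1] n = harmonic n := by
  induction n with
  | zero => rfl
  | succ n ih => rw [H_cons_succ, ih, harmonic_succ, H]; simp

lemma two_mul_H_one_one (n : ℕ) :
    2 * H [1, 1] n = harmonic n ^ 2 - ∑ m ∈ Icc 1 n, 1 / (m : ℚ) ^ 2 := by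
  induction n with
  | zero => simp [H]
  | succ n ih =>
    rw [H_cons_succ, H_singleton_one, mul_add, ih, sum_Icc_succ_top (by omega), harmonic_succ]
    push_cast
    field_simp
    ring

lemma sum_Icc_one_eq_sum_range {M : Type*} [AddCommMonoid M] (f : ℕ → M) (n : ℕ) :
    ∑ m ∈ Icc 1 n, f m = ∑ i ∈ range n, f (i + 1) := by
  rw [range_eq_Ico, sum_Ico_add']
  rfl

lemma tendsto_sum_Icc_one_div_pow_zeta {k : ℕ} (hk : 1 < k) :
    Tendsto (fun n : ℕ => ∑ m ∈ Icc 1 n, 1 / (m : ℝ) ^ k) atTop (𝓝 (zeta k)) := by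
  have hsum : Summable fun i : ℕ => 1 / ((i : ℝ) + 1) ^ k := by
    simpa using (summable_nat_add_iff 1).mpr (summable_one_div_nat_pow.mpr hk)
  simpa [sum_Icc_one_eq_sum_range, zeta] using hsum.hasSum.tendsto_sum_nat

lemma log_natCast_add_one_sub_log_le {n : ℕ} (hn : n ≠ 0) :
    log ((n : ℝ) + 1) - log n ≤ 1 / n := by
  have hn_pos : (0 : ℝ) < n := by positivity
  rw [← log_div (by positivity) hn_pos.ne']
  calc log (((n : ℝ) + 1) / n) ≤ ((n : ℝ) + 1) / n - 1 := log_le_sub_one_of_pos (by positivity)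
    _ = 1 / n := by field_simp; ring

lemma harmonic_sub_log_sub_eulerMascheroniConstant_mem_Icc {n : ℕ} (hn : n ≠ 0) :
    (harmonic n : ℝ) - log n - γ ∈ Set.Icc 0 (1 / (n : ℝ)) := by
  have hupper := eulerMascheroniConstant_lt_eulerMascheroniSeq' n
  have hlower := eulerMascheroniSeq_lt_eulerMascheroniConstant n
  rw [eulerMascheroniSeq', if_neg hn] at hupper
  rw [eulerMascheroniSeq] at hlower
  have hlog_step := log_natCast_add_one_sub_log_le hn
  constructor <;> linarith

lemma tendsto_log_mul_harmonic_sub_log_sub_eulerMascheroniConstant :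
    Tendsto (fun n : ℕ => log n * ((harmonic n : ℝ) - log n - γ)) atTop (𝓝 0) := by
  have hlog_div : Tendsto (fun n : ℕ => log n / n) atTop (𝓝 0) :=
    isLittleO_log_id_atTop.tendsto_div_nhds_zero.comp tendsto_natCast_atTop_atTop
  refine squeeze_zero' ?_ ?_ hlog_div
  · filter_upwards [eventually_ne_atTop 0] with n hn
    exact mul_nonneg (log_natCast_nonneg n)
      (harmonic_sub_log_sub_eulerMascheroniConstant_mem_Icc hn).1
  · filter_upwards [eventually_ne_atTop 0] with n hn
    exact (mul_le_mul_of_nonneg_left (harmonic_sub_log_sub_eulerMascheroniConstant_mem_Icc hn).2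
      (log_natCast_nonneg n)).trans_eq (mul_one_div _ _)

/-- finite part of the divergent harmonic sum `H_{1,1}`: the sequence
`H_{1,1}(n) − (1/2)·(log n)² − γ·log n` converges as `n → ∞`, with limit
`(γ² − ζ(2))/2`, where `γ` is the Euler–Mascheroni constant. -/
theorem finitePart_H_one_one :
    Filter.Tendsto
      (fun n : ℕ => (H [1, 1] n : ℝ) - (1 / 2) * Real.log n ^ 2
        - Real.eulerMascheroniConstant * Real.log n)
      Filter.atTop
      (nhds ((Real.eulerMascheroniConstant ^ 2 - zeta 2) / 2)) := by
  have he : Tendsto (fun n : ℕ => (harmonic n : ℝ) - log n - γ) atTop (𝓝 0) := by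
    simpa using tendsto_harmonic_sub_log.sub_const γ
  have hlim := (((tendsto_const_nhds (x := γ ^ 2)).sub
    (tendsto_sum_Icc_one_div_pow_zeta one_lt_two)).div_const 2).add
    ((he.const_mul γ).add tendsto_log_mul_harmonic_sub_log_sub_eulerMascheroniConstant)
    |>.add ((he.pow 2).div_const 2)
  convert hlim using 2 with n
  · have h := congrArg ((↑) : ℚ → ℝ) (two_mul_H_one_one n)
    push_cast at h
    linear_combination h / 2
  · simp
end
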